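/- Let H = {y < L} and Ĥ = {y > −L̂} be half-planes in ℝ² with L, L̂ > 0. Let Ξ⁺ be as in the half-plane Green's function functional with positive coefficients α_{ij}, β_i, let γ_i ≥ 0, and let φ ∈ C¹(H ∩ Ĥ) satisfy ∇φ(z)·(0,1) ≤ 0 for all z ∈ H ∩ Ĥ. Then the functional Ξ(z₁,…,z_J) = Ξ⁺(z₁,…,z_J) + Σ_i γ_i φ(z_i), defined on (H ∩ Ĥ)^J minus the diagonal, has no critical points. -/

import Mathlib

/-!
Translating every point vertically by `t` is the same as moving the boundary line from `y = L`
to `y = L - t`. Both the half-plane Green's function and the Robin function increase with `L`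
(the Robin function strictly), so along the translation `t ↦ z + t • (e₂, …, e₂)` the functional
`Ξ⁺` has strictly negative derivative, while `φ` is nonincreasing in that direction. Hence the
derivative of `Ξ` in the direction `(e₂, …, e₂)` is negative and cannot vanish.
-/

/-- Reflection of a point of `ℝ²` across the horizontal line `y = L`. -/
noncomputable def reflAcross (L : ℝ) (η : EuclideanSpace ℝ (Fin 2)) :
    EuclideanSpace ℝ (Fin 2) :=
  WithLp.toLp 2 (fun i => if i = 1 then 2 * L - η 1 else η i)

/-- Green's function of the half-plane `H = {y < L}`. -/
noncomputable def greenHalfPlane (L : ℝ) (z η : EuclideanSpace ℝ (Fin 2)) : ℝ :=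
  (1 / (2 * Real.pi)) * Real.log (dist z (reflAcross L η) / dist z η)

/-- Robin function of the half-plane `H = {y < L}`. -/
noncomputable def robinHalfPlane (L : ℝ) (z : EuclideanSpace ℝ (Fin 2)) : ℝ :=
  (1 / (2 * Real.pi)) * Real.log (2 * (L - z 1))

open Real

local notation "e₂" => EuclideanSpace.single (1 : Fin 2) (1 : ℝ)

lemma add_smul_single_apply_one (w : EuclideanSpace ℝ (Fin 2)) (t : ℝ) :
    (w + t • e₂) 1 = w 1 + t := by
  simp

lemma dist_reflAcross (L : ℝ) (z w : EuclideanSpace ℝ (Fin 2)) :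
    dist z (reflAcross L w) = √((z 0 - w 0) ^ 2 + (z 1 + w 1 - 2 * L) ^ 2) := by
  rw [EuclideanSpace.dist_eq, Fin.sum_univ_two]
  simp [Real.dist_eq, reflAcross, sq_abs]

lemma greenHalfPlane_add_smul_single (L t : ℝ) (z w : EuclideanSpace ℝ (Fin 2)) :
    greenHalfPlane L (z + t • e₂) (w + t • e₂) = greenHalfPlane (L - t) z w := by
  simp only [greenHalfPlane, dist_reflAcross, dist_add_right]
  congr 4
  simp
  ring

lemma robinHalfPlane_add_smul_single (L t : ℝ) (z : EuclideanSpace ℝ (Fin 2)) :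
    robinHalfPlane L (z + t • e₂) = robinHalfPlane (L - t) z := by
  simp only [robinHalfPlane, add_smul_single_apply_one]
  ring_nf

lemma hasDerivAt_greenHalfPlane_boundary {L : ℝ} {z w : EuclideanSpace ℝ (Fin 2)}
    (hzw : z ≠ w) (hL : z 1 + w 1 ≠ 2 * L) :
    HasDerivAt (fun L => greenHalfPlane L z w)
      ((2 * L - z 1 - w 1) / (π * ((z 0 - w 0) ^ 2 + (z 1 + w 1 - 2 * L) ^ 2))) L := by
  have hQ : 0 < (z 0 - w 0) ^ 2 + (z 1 + w 1 - 2 * L) ^ 2 := by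
    have := sub_ne_zero.2 hL
    positivity
  have hd : 0 < dist z w := dist_pos.2 hzw
  have hQderiv : HasDerivAt (fun L => (z 0 - w 0) ^ 2 + (z 1 + w 1 - 2 * L) ^ 2)
      (2 * (z 1 + w 1 - 2 * L) * -2) L := by
    simpa using ((((hasDerivAt_id L).const_mul 2).const_sub (z 1 + w 1)).pow 2).const_add
      ((z 0 - w 0) ^ 2)
  have := (((hQderiv.sqrt hQ.ne').div_const (dist z w)).log (by positivity)).const_mul (1 / (2 * π))
  simp only [greenHalfPlane, dist_reflAcross]
  refine this.congr_deriv ?_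
  field_simp
  rw [sq_sqrt hQ.le]
  ring

lemma hasDerivAt_robinHalfPlane_boundary {L : ℝ} {z : EuclideanSpace ℝ (Fin 2)} (hz : z 1 ≠ L) :
    HasDerivAt (fun L => robinHalfPlane L z) (1 / (2 * π * (L - z 1))) L := by
  have := ((((hasDerivAt_id' L).sub_const (z 1)).const_mul 2).log
    (by simpa [sub_eq_zero] using hz.symm)).const_mul (1 / (2 * π))
  refine this.congr_deriv ?_
  field_simp

lemma hasDerivAt_greenHalfPlane_vertical {L : ℝ} {z w : EuclideanSpace ℝ (Fin 2)}
    (hzw : z ≠ w) (hL : z 1 + w 1 ≠ 2 * L) :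
    HasDerivAt (fun t : ℝ => greenHalfPlane L (z + t • e₂) (w + t • e₂))
      (-((2 * L - z 1 - w 1) / (π * ((z 0 - w 0) ^ 2 + (z 1 + w 1 - 2 * L) ^ 2)))) 0 := by
  simp only [greenHalfPlane_add_smul_single]
  exact ((hasDerivAt_greenHalfPlane_boundary hzw hL).comp_of_eq 0
    ((hasDerivAt_id' 0).const_sub L) (sub_zero L).symm).congr_deriv (by ring)

lemma hasDerivAt_robinHalfPlane_vertical {L : ℝ} {z : EuclideanSpace ℝ (Fin 2)} (hz : z 1 ≠ L) :
    HasDerivAt (fun t : ℝ => robinHalfPlane L (z + t • e₂)) (-(1 / (2 * π * (L - z 1)))) 0 := by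
  simp only [robinHalfPlane_add_smul_single]
  exact ((hasDerivAt_robinHalfPlane_boundary hz).comp_of_eq 0
    ((hasDerivAt_id' 0).const_sub L) (sub_zero L).symm).congr_deriv (by ring)

section FiniteSums

variable {ι : Type*} [Fintype ι] {f : ι → ℝ → ℝ} {x : ℝ}

lemma exists_hasDerivAt_sum_nonpos (h : ∀ i, ∃ d ≤ 0, HasDerivAt (f i) d x) :
    ∃ d ≤ 0, HasDerivAt (fun t => ∑ i, f i t) d x := by
  choose d hd hf using h
  exact ⟨_, Finset.sum_nonpos fun i _ => hd i, HasDerivAt.fun_sum fun i _ => hf i⟩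

lemma exists_hasDerivAt_sum_neg [Nonempty ι] (h : ∀ i, ∃ d < 0, HasDerivAt (f i) d x) :
    ∃ d < 0, HasDerivAt (fun t => ∑ i, f i t) d x := by
  choose d hd hf using h
  exact ⟨_, Finset.sum_neg (fun i _ => hd i) Finset.univ_nonempty,
    HasDerivAt.fun_sum fun i _ => hf i⟩

end FiniteSums

section VerticalTranslation

variable {ι : Type*} [Fintype ι] {L : ℝ} {z : ι → EuclideanSpace ℝ (Fin 2)}

lemma exists_hasDerivAt_nonpos_interaction_vertical [DecidableEq ι] {α : ι → ι → ℝ}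
    (hα : ∀ i j, i ≠ j → 0 ≤ α i j) (hz : Function.Injective z) (hzH : ∀ i, z i 1 < L) :
    ∃ d ≤ 0, HasDerivAt (fun t : ℝ => ∑ i, ∑ j,
      if i = j then 0 else α i j * greenHalfPlane L (z i + t • e₂) (z j + t • e₂)) d 0 := by
  refine exists_hasDerivAt_sum_nonpos fun i => exists_hasDerivAt_sum_nonpos fun j => ?_
  by_cases hij : i = j
  · exact ⟨0, le_rfl, by simpa only [hij, if_true] using hasDerivAt_const (0 : ℝ) (0 : ℝ)⟩
  have hi := hzH i
  have hj := hzH j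
  have hd := (hasDerivAt_greenHalfPlane_vertical (L := L) (hz.ne hij) (by linarith)).const_mul
    (α i j)
  refine ⟨_, mul_nonpos_of_nonneg_of_nonpos (hα i j hij) ?_, by simpa only [hij, if_false] using hd⟩
  exact neg_nonpos.2 (div_nonneg (by linarith) (by positivity))

lemma exists_hasDerivAt_neg_robin_vertical [Nonempty ι] {β : ι → ℝ} (hβ : ∀ i, 0 < β i)
    (hzH : ∀ i, z i 1 < L) :
    ∃ d < 0, HasDerivAt (fun t : ℝ => ∑ i, β i * robinHalfPlane L (z i + t • e₂)) d 0 := by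
  refine exists_hasDerivAt_sum_neg fun i => ?_
  have hi := hzH i
  exact ⟨_, mul_neg_of_pos_of_neg (hβ i) (neg_neg_of_pos (by positivity)),
    (hasDerivAt_robinHalfPlane_vertical hi.ne).const_mul (β i)⟩

lemma exists_hasDerivAt_nonpos_potential_vertical {γ : ι → ℝ} (hγ : ∀ i, 0 ≤ γ i)
    {φ : EuclideanSpace ℝ (Fin 2) → ℝ} {φ' : ι → EuclideanSpace ℝ (Fin 2) →L[ℝ] ℝ}
    (hφ : ∀ i, HasFDerivAt φ (φ' i) (z i)) (hφmono : ∀ i, φ' i e₂ ≤ 0) :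
    ∃ d ≤ 0, HasDerivAt (fun t : ℝ => ∑ i, γ i * φ (z i + t • e₂)) d 0 := by
  refine exists_hasDerivAt_sum_nonpos fun i =>
    ⟨_, mul_nonpos_of_nonneg_of_nonpos (hγ i) (hφmono i), ?_⟩
  have hline : HasDerivAt (fun t : ℝ => z i + t • e₂) e₂ 0 := by
    simpa using ((hasDerivAt_id' (0 : ℝ)).smul_const e₂).const_add (z i)
  exact ((hφ i).comp_hasDerivAt_of_eq 0 hline (by simp)).const_mul (γ i)

end VerticalTranslation

theorem no_critical_points_green_plus_phi_general (L Lhat : ℝ)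
    (J : ℕ) (hJ : 1 ≤ J)
    (α : Fin J → Fin J → ℝ) (hα : ∀ i j, i ≠ j → 0 < α i j)
    (β : Fin J → ℝ) (hβ : ∀ i, 0 < β i)
    (γ : Fin J → ℝ) (hγ : ∀ i, 0 ≤ γ i)
    (φ : EuclideanSpace ℝ (Fin 2) → ℝ)
    (φ' : EuclideanSpace ℝ (Fin 2) → (EuclideanSpace ℝ (Fin 2) →L[ℝ] ℝ))
    (hφdiff : ∀ w : EuclideanSpace ℝ (Fin 2), -Lhat < w 1 → w 1 < L →
      HasFDerivAt φ (φ' w) w)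
    (hφmono : ∀ w : EuclideanSpace ℝ (Fin 2), -Lhat < w 1 → w 1 < L →
      φ' w (EuclideanSpace.single 1 1) ≤ 0)
    (z : Fin J → EuclideanSpace ℝ (Fin 2))
    (hzH : ∀ i, z i 1 < L) (hzHhat : ∀ i, -Lhat < z i 1)
    (hz : Function.Injective z) :
    ¬ HasFDerivAt
        (fun w : Fin J → EuclideanSpace ℝ (Fin 2) =>
          (∑ i : Fin J, ∑ j : Fin J,
            if i = j then 0 else α i j * greenHalfPlane L (w i) (w j))
          + ∑ i : Fin J, β i * robinHalfPlane L (w i)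
          + ∑ i : Fin J, γ i * φ (w i))
        (0 : (Fin J → EuclideanSpace ℝ (Fin 2)) →L[ℝ] ℝ) z := by
  intro hcrit
  have : Nonempty (Fin J) := ⟨⟨0, hJ⟩⟩
  obtain ⟨dG, hdG, hG⟩ := exists_hasDerivAt_nonpos_interaction_vertical
    (fun i j hij => (hα i j hij).le) hz hzH
  obtain ⟨dR, hdR, hR⟩ := exists_hasDerivAt_neg_robin_vertical hβ hzH
  obtain ⟨dP, hdP, hP⟩ := exists_hasDerivAt_nonpos_potential_vertical hγ
    (fun i => hφdiff (z i) (hzHhat i) (hzH i)) (fun i => hφmono (z i) (hzHhat i) (hzH i))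
  have hline : HasDerivAt (fun t : ℝ => z + t • fun _ => e₂) (fun _ => e₂) 0 := by
    simpa using ((hasDerivAt_id' (0 : ℝ)).smul_const _).const_add z
  have hzero := (hcrit.comp_hasDerivAt_of_eq 0 hline (by simp)).unique ((hG.add hR).add hP)
  simp only [zero_apply] at hzero
  linarith

/-- On the strip `H ∩ Ĥ = {−L̂ < y < L}`, the functional
`Ξ = Σ_{i≠j} α_{ij} G_H(z_i,z_j) + Σ_i β_i H_H(z_i,z_i) + Σ_i γ_i φ(z_i)`,
where `γ_i ≥ 0` and `φ` is `C¹` on the strip with `∇φ·(0,1) ≤ 0`, has no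
critical points on `(H ∩ Ĥ)^J` minus the diagonal. -/
theorem no_critical_points_green_plus_phi (L Lhat : ℝ) (hL : 0 < L) (hLhat : 0 < Lhat)
    (J : ℕ) (hJ : 1 ≤ J)
    (α : Fin J → Fin J → ℝ) (hα : ∀ i j, i ≠ j → 0 < α i j)
    (β : Fin J → ℝ) (hβ : ∀ i, 0 < β i)
    (γ : Fin J → ℝ) (hγ : ∀ i, 0 ≤ γ i)
    (φ : EuclideanSpace ℝ (Fin 2) → ℝ)
    (φ' : EuclideanSpace ℝ (Fin 2) → (EuclideanSpace ℝ (Fin 2) →L[ℝ] ℝ))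
    (hφdiff : ∀ w : EuclideanSpace ℝ (Fin 2), -Lhat < w 1 → w 1 < L →
      HasFDerivAt φ (φ' w) w)
    (hφcont : ∀ w : EuclideanSpace ℝ (Fin 2), -Lhat < w 1 → w 1 < L →
      ContinuousWithinAt φ' {v : EuclideanSpace ℝ (Fin 2) | -Lhat < v 1 ∧ v 1 < L} w)
    (hφmono : ∀ w : EuclideanSpace ℝ (Fin 2), -Lhat < w 1 → w 1 < L →
      φ' w (EuclideanSpace.single 1 1) ≤ 0)
    (z : Fin J → EuclideanSpace ℝ (Fin 2))
    (hzH : ∀ i, z i 1 < L) (hzHhat : ∀ i, -Lhat < z i 1)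
    (hz : Function.Injective z) :
    ¬ HasFDerivAt
        (fun w : Fin J → EuclideanSpace ℝ (Fin 2) =>
          (∑ i : Fin J, ∑ j : Fin J,
            if i = j then 0 else α i j * greenHalfPlane L (w i) (w j))
          + ∑ i : Fin J, β i * robinHalfPlane L (w i)
          + ∑ i : Fin J, γ i * φ (w i))
        (0 : (Fin J → EuclideanSpace ℝ (Fin 2)) →L[ℝ] ℝ) z :=
  no_critical_points_green_plus_phi_general L Lhat J hJ α hα β hβ γ hγ φ φ' hφdiff hφmono z hzH
    hzHhat hz
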